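/- arXiv:2208.08401 — 6 statements merged into one kernel-verified Lean document; each statement's English description precedes it below -/
import Mathlib

section
/- Let n ≥ 1 and let S₁,…,S_{n+1} be real-valued random variables that are exchangeable, i.e. for every permutation π of {1,…,n+1} the vector (S_{π(1)},…,S_{π(n+1)}) has the same joint distribution as (S₁,…,S_{n+1}). Fix α ∈ (0,1) and define the empirical quantile Q := inf{x ∈ ℝ : (1/(n+1))·#{i ∈ {1,…,n+1} : S_i ≤ x} ≥ 1−α}. Then ℙ(S_{n+1} ≤ Q) ≥ 1 − α. -/
/-! Swapping two coordinates preserves the joint law of the scores and does not change their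
empirical quantile `Q`, so the events `{S i ≤ Q}` all have the same probability `p`. The empirical
distribution function is upper semicontinuous, hence `Q` belongs to the set whose infimum defines
it: at every outcome at least `(1 - α) (n + 1)` of these events occur. Taking the expectation of
their number gives `(n + 1) p ≥ (1 - α) (n + 1)`. -/

open MeasureTheory Finset

namespace Conformal

section EmpiricalQuantile

variable {ι : Type*} [Fintype ι]

noncomputable def empiricalCDF (v : ι → ℝ) (x : ℝ) : ℝ :=
  (Fintype.card ι : ℝ)⁻¹ * #{i | v i ≤ x}

noncomputable def empiricalQuantile (τ : ℝ) (v : ι → ℝ) : ℝ :=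
  sInf {x | τ ≤ empiricalCDF v x}

lemma empiricalCDF_eq_sum_indicator (v : ι → ℝ) (x : ℝ) :
    empiricalCDF v x =
      ∑ i, (Set.Ici (v i)).indicator (fun _ => (Fintype.card ι : ℝ)⁻¹) x := by
  rw [empiricalCDF, natCast_card_filter, mul_sum]
  simp [Set.indicator_apply]

lemma monotone_empiricalCDF (v : ι → ℝ) : Monotone (empiricalCDF v) := fun x y hxy => by
  unfold empiricalCDF
  gcongr

lemma empiricalCDF_comp_perm (v : ι → ℝ) (σ : Equiv.Perm ι) :
    empiricalCDF (v ∘ σ) = empiricalCDF v := by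
  ext x
  unfold empiricalCDF
  congr 2
  exact card_equiv σ (by simp)

lemma upperSemicontinuous_empiricalCDF (v : ι → ℝ) : UpperSemicontinuous (empiricalCDF v) := by
  rw [funext (empiricalCDF_eq_sum_indicator v)]
  exact upperSemicontinuous_sum fun i _ =>
    isClosed_Ici.upperSemicontinuous_indicator (by positivity)

lemma empiricalCDF_eq_zero_of_lt {v : ι → ℝ} {x : ℝ} (h : ∀ i, x < v i) :
    empiricalCDF v x = 0 := by
  simp [empiricalCDF, fun i => (h i).not_ge]

lemma empiricalCDF_eq_one_of_le [Nonempty ι] {v : ι → ℝ} {x : ℝ} (h : ∀ i, v i ≤ x) :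
    empiricalCDF v x = 1 := by
  simp [empiricalCDF, h]

lemma empiricalQuantile_le_iff [Nonempty ι] {τ : ℝ} (hτ0 : 0 < τ) (hτ1 : τ ≤ 1)
    (v : ι → ℝ) (x : ℝ) : empiricalQuantile τ v ≤ x ↔ τ ≤ empiricalCDF v x := by
  obtain ⟨a, ha⟩ := (Set.finite_range v).bddBelow
  obtain ⟨b, hb⟩ := (Set.finite_range v).bddAbove
  have hne : {x | τ ≤ empiricalCDF v x}.Nonempty :=
    ⟨b, by simp [empiricalCDF_eq_one_of_le fun i => hb ⟨i, rfl⟩, hτ1]⟩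
  have hbdd : BddBelow {x | τ ≤ empiricalCDF v x} := ⟨a, fun y hy => not_lt.1 fun hya => by
    have := empiricalCDF_eq_zero_of_lt fun i => hya.trans_le (ha ⟨i, rfl⟩)
    simp only [Set.mem_ofPred_eq, this] at hy
    linarith⟩
  have hmem : τ ≤ empiricalCDF v (empiricalQuantile τ v) :=
    ((upperSemicontinuous_empiricalCDF v).isClosed_preimage τ).csInf_mem hne hbdd
  exact ⟨fun h => hmem.trans (monotone_empiricalCDF v h), fun h => csInf_le hbdd h⟩

lemma mul_card_le_card_le_empiricalQuantile [Nonempty ι] {τ : ℝ} (hτ0 : 0 < τ)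
    (hτ1 : τ ≤ 1) (v : ι → ℝ) :
    τ * Fintype.card ι ≤ #{i | v i ≤ empiricalQuantile τ v} := by
  have h := (empiricalQuantile_le_iff hτ0 hτ1 v _).1 le_rfl
  rwa [empiricalCDF, le_inv_mul_iff₀ (by positivity), mul_comm] at h

lemma empiricalQuantile_comp_perm (τ : ℝ) (v : ι → ℝ) (σ : Equiv.Perm ι) :
    empiricalQuantile τ (v ∘ σ) = empiricalQuantile τ v := by
  rw [empiricalQuantile, empiricalCDF_comp_perm, empiricalQuantile]

lemma measurable_empiricalCDF_apply (x : ℝ) :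
    Measurable fun v : ι → ℝ => empiricalCDF v x := by
  simp_rw [empiricalCDF_eq_sum_indicator, Set.indicator_apply, Set.mem_Ici]
  exact Finset.measurable_sum _ fun i _ => Measurable.ite
    (measurableSet_le (measurable_pi_apply i) measurable_const) measurable_const measurable_const

lemma measurable_empiricalQuantile [Nonempty ι] {τ : ℝ} (hτ0 : 0 < τ) (hτ1 : τ ≤ 1) :
    Measurable (empiricalQuantile τ : (ι → ℝ) → ℝ) :=
  measurable_of_Iic fun x => by
    simp_rw [Set.preimage, Set.mem_Iic, empiricalQuantile_le_iff hτ0 hτ1]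
    exact measurableSet_le measurable_const (measurable_empiricalCDF_apply x)

end EmpiricalQuantile

section Exchangeable

variable {ι Ω : Type*} [MeasurableSpace Ω] {μ : Measure Ω}

def Exchangeable (μ : Measure Ω) (X : ι → Ω → ℝ) : Prop :=
  ∀ π : Equiv.Perm ι, μ.map (fun ω i => X (π i) ω) = μ.map (fun ω i => X i ω)

lemma le_sum_measureReal_of_le_card [Fintype ι] [IsProbabilityMeasure μ] {E : ι → Set Ω}
    [∀ i ω, Decidable (ω ∈ E i)] (hE : ∀ i, MeasurableSet (E i)) {c : ℝ}
    (hc : ∀ ω, c ≤ #{i | ω ∈ E i}) :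
    c ≤ ∑ i, μ.real (E i) := by
  have hcount : ∀ ω, (#{i | ω ∈ E i} : ℝ) = ∑ i, (E i).indicator 1 ω := fun ω => by
    rw [natCast_card_filter]
    simp [Set.indicator_apply]
  have hint : ∀ i, Integrable ((E i).indicator (1 : Ω → ℝ)) μ := fun i =>
    (integrable_const 1).indicator (hE i)
  calc c = ∫ _, c ∂μ := by simp
    _ ≤ ∫ ω, ∑ i, (E i).indicator 1 ω ∂μ :=
      integral_mono (integrable_const c) (integrable_finsetSum _ fun i _ => hint i)
        fun ω => (hc ω).trans_eq (hcount ω)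
    _ = ∑ i, μ.real (E i) := by
      simp [integral_finsetSum _ fun i _ => hint i, integral_indicator_one (hE _)]

lemma Exchangeable.measure_le_statistic_eq {X : ι → Ω → ℝ}
    (hexch : Exchangeable μ X) (hX : ∀ i, Measurable (X i)) {q : (ι → ℝ) → ℝ}
    (hq : Measurable q) (hq_perm : ∀ (π : Equiv.Perm ι) v, q (v ∘ π) = q v) (i j : ι) :
    μ {ω | X i ω ≤ q (fun k => X k ω)} = μ {ω | X j ω ≤ q (fun k => X k ω)} := by
  classical
  have hA : MeasurableSet {v : ι → ℝ | v j ≤ q v} :=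
    measurableSet_le (measurable_pi_apply j) hq
  have hpre : {ω | X i ω ≤ q (fun k => X k ω)}
      = (fun ω k => X (Equiv.swap i j k) ω) ⁻¹' {v | v j ≤ q v} := by
    ext ω
    simp only [Set.mem_preimage, Set.mem_ofPred_eq, Equiv.swap_apply_right]
    rw [show (fun k => X (Equiv.swap i j k) ω) = (fun k => X k ω) ∘ Equiv.swap i j from rfl,
      hq_perm]
  rw [hpre, ← Measure.map_apply (by fun_prop) hA, hexch, Measure.map_apply (by fun_prop) hA]
  rfl

theorem Exchangeable.le_measureReal_le_statistic [Fintype ι] [IsProbabilityMeasure μ]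
    {X : ι → Ω → ℝ} (hexch : Exchangeable μ X) (hX : ∀ i, Measurable (X i))
    {q : (ι → ℝ) → ℝ} (hq : Measurable q) (hq_perm : ∀ (π : Equiv.Perm ι) v, q (v ∘ π) = q v)
    {τ : ℝ} (hτ : ∀ ω, τ * Fintype.card ι ≤ #{i | X i ω ≤ q (fun k => X k ω)}) (j : ι) :
    τ ≤ μ.real {ω | X j ω ≤ q (fun k => X k ω)} := by
  classical
  have hsum := le_sum_measureReal_of_le_card (μ := μ)
    (E := fun i => {ω | X i ω ≤ q fun k => X k ω})
    (fun i => measurableSet_le (hX i) (hq.comp (measurable_pi_lambda _ hX))) hτ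
  have hequal : ∀ i, μ.real {ω | X i ω ≤ q fun k => X k ω}
      = μ.real {ω | X j ω ≤ q fun k => X k ω} := fun i => by
    simp only [measureReal_def, hexch.measure_le_statistic_eq hX hq hq_perm i j]
  rw [sum_congr rfl fun i _ => hequal i, sum_const, card_univ, nsmul_eq_mul, mul_comm] at hsum
  have : Nonempty ι := ⟨j⟩
  exact le_of_mul_le_mul_left hsum (by positivity)

end Exchangeable

end Conformal

open Conformal

theorem conformal_coverage_lower_bound_general
    {Ω : Type*} [MeasurableSpace Ω] (μ : Measure Ω) [IsProbabilityMeasure μ]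
    (n : ℕ)
    (S : Fin (n + 1) → Ω → ℝ) (hSmeas : ∀ i, Measurable (S i))
    (hexch : ∀ π : Equiv.Perm (Fin (n + 1)),
      Measure.map (fun ω => fun i => S (π i) ω) μ
        = Measure.map (fun ω => fun i => S i ω) μ)
    (α : ℝ) (hα : α ∈ Set.Ioo (0 : ℝ) 1)
    (Q : Ω → ℝ)
    (hQ : ∀ ω, Q ω = sInf {x : ℝ |
      1 - α ≤ ((n : ℝ) + 1)⁻¹ *
        ((Finset.univ.filter (fun i : Fin (n + 1) => S i ω ≤ x)).card : ℝ)}) :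
    1 - α ≤ (μ {ω | S (Fin.last n) ω ≤ Q ω}).toReal := by
  obtain ⟨hα0, hα1⟩ := hα
  have hτ0 : 0 < 1 - α := by linarith
  have hτ1 : 1 - α ≤ 1 := by linarith
  have hQ_eq : Q = fun ω => empiricalQuantile (1 - α) fun i => S i ω := by
    ext ω
    simp [hQ, empiricalQuantile, empiricalCDF]
  subst hQ_eq
  exact Exchangeable.le_measureReal_le_statistic hexch hSmeas
    (measurable_empiricalQuantile hτ0 hτ1) (fun π v => empiricalQuantile_comp_perm _ v π)
    (fun ω => mul_card_le_card_le_empiricalQuantile hτ0 hτ1 _) (Fin.last n)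

/-- Conformal prediction coverage lower bound: for exchangeable real-valued random
variables `S 0, …, S n` (with `n ≥ 1`), the last one lies below the `1-α` empirical
quantile of all `n+1` values with probability at least `1-α`. -/
theorem conformal_coverage_lower_bound
    {Ω : Type*} [MeasurableSpace Ω] (μ : Measure Ω) [IsProbabilityMeasure μ]
    (n : ℕ) (hn : 1 ≤ n)
    (S : Fin (n + 1) → Ω → ℝ) (hSmeas : ∀ i, Measurable (S i))
    (hexch : ∀ π : Equiv.Perm (Fin (n + 1)),
      Measure.map (fun ω => fun i => S (π i) ω) μ
        = Measure.map (fun ω => fun i => S i ω) μ)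
    (α : ℝ) (hα : α ∈ Set.Ioo (0 : ℝ) 1)
    (Q : Ω → ℝ)
    (hQ : ∀ ω, Q ω = sInf {x : ℝ |
      1 - α ≤ ((n : ℝ) + 1)⁻¹ *
        ((Finset.univ.filter (fun i : Fin (n + 1) => S i ω ≤ x)).card : ℝ)}) :
    1 - α ≤ (μ {ω | S (Fin.last n) ω ≤ Q ω}).toReal :=
  conformal_coverage_lower_bound_general μ n S hSmeas hexch α hα Q hQ
end

section
/- Let n ≥ 1 and let S₁,…,S_{n+1} be real-valued exchangeable random variables such that, with probability one, all the values S₁,…,S_{n+1} are distinct. Fix α ∈ (0,1) and define the empirical quantile Q := inf{x ∈ ℝ : (1/(n+1))·#{i ∈ {1,…,n+1} : S_i ≤ x} ≥ 1−α}. Then ℙ(S_{n+1} ≤ Q) ≤ 1 − α + 1/(n+1). -/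
/-!
Put `k = ⌈(1 - α)(n + 1)⌉`. The last score lies below the empirical quantile exactly when fewer
than `k` scores lie strictly below it. By exchangeability every index has the same probability
of this event, and when the scores are distinct their ranks are distinct, so at most `k` indices
have it. Hence `(n + 1) · ℙ(S_{n+1} ≤ Q) ≤ k < (1 - α)(n + 1) + 1`.
-/

open MeasureTheory

namespace Conformal

open Finset

section Rank

variable {ι α : Type*} [Fintype ι] [LinearOrder α]

def rank (v : ι → α) (j : ι) : ℕ := #{i | v i < v j}

theorem rank_lt_rank {v : ι → α} {j j' : ι} (h : v j < v j') :
    rank v j < rank v j' := by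
  refine card_lt_card ⟨fun i hi => ?_, fun hsub => ?_⟩
  · simp only [mem_filter, mem_univ, true_and] at hi ⊢
    exact hi.trans h
  · exact lt_irrefl (v j) (mem_filter.1 (hsub (mem_filter.2 ⟨mem_univ _, h⟩))).2

theorem rank_injective {v : ι → α} (hv : Function.Injective v) :
    Function.Injective (rank v) := by
  intro j j' h
  by_contra hne
  rcases (hv.ne hne).lt_or_gt with hlt | hgt
  · exact (rank_lt_rank hlt).ne h
  · exact (rank_lt_rank hgt).ne' h

theorem card_rank_lt_le {v : ι → α} (hv : Function.Injective v) (k : ℕ) :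
    #{j | rank v j < k} ≤ k := by
  simpa using card_le_card_of_injOn (t := range k) (rank v)
    (fun j hj => by simpa using hj) (rank_injective hv).injOn

theorem rank_comp_perm (v : ι → α) (π : Equiv.Perm ι) (j : ι) :
    rank (fun i => v (π i)) j = rank v (π j) :=
  card_equiv π (by simp)

end Rank

theorem le_csInf_card_le_iff_rank_lt {ι α : Type*} [Fintype ι] [ConditionallyCompleteLinearOrder α]
    (v : ι → α) (j : ι) {k : ℕ} (hk : 1 ≤ k) (hkι : k ≤ Fintype.card ι) :
    v j ≤ sInf {x | k ≤ #{i | v i ≤ x}} ↔ rank v j < k := by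
  set T := {x | k ≤ #{i | v i ≤ x}}
  have hT : T.Nonempty := by
    obtain ⟨i₀, -, hi₀⟩ := exists_max_image univ v (univ_nonempty_iff.2 ⟨j⟩)
    exact ⟨v i₀, by simpa [T, filter_true_of_mem fun i _ => hi₀ i (mem_univ i)] using hkι⟩
  have hTbdd : BddBelow T := by
    obtain ⟨m, hm⟩ := (Set.finite_range v).bddBelow
    refine ⟨m, fun x hx => ?_⟩
    obtain ⟨i, hi⟩ := card_pos.1 (lt_of_lt_of_le hk hx)
    exact (hm ⟨i, rfl⟩).trans (mem_filter.1 hi).2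
  rw [le_csInf_iff hTbdd hT]
  constructor
  · intro h
    by_contra! hrank
    -- the largest score strictly below `v j` is then a point of `T` below `v j`
    have hne : ({i | v i < v j} : Finset ι).Nonempty := card_pos.1 (lt_of_lt_of_le hk hrank)
    obtain ⟨i₀, hi₀, hmax⟩ := exists_max_image _ v hne
    have hlt : v i₀ < v j := (mem_filter.1 hi₀).2
    refine (h (v i₀) (hrank.trans (card_le_card fun i hi => ?_))).not_gt hlt
    simp only [mem_filter, mem_univ, true_and] at hi ⊢
    exact hmax i (by simpa using hi)
  · intro h x hx
    by_contra! hlt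
    refine (hx.trans (card_le_card fun i hi => ?_)).not_gt h
    simp only [mem_filter, mem_univ, true_and] at hi ⊢
    exact hi.trans_lt hlt

section Exchangeable

variable {Ω ι α : Type*} [MeasurableSpace Ω] {μ : Measure Ω} [Fintype ι]
  [TopologicalSpace α] [MeasurableSpace α] [OpensMeasurableSpace α] [LinearOrder α]
  [OrderClosedTopology α] [SecondCountableTopology α]
  {X : Ω → ι → α}

theorem measurable_rank (j : ι) : Measurable fun v : ι → α => rank v j := by
  classical
  simp_rw [rank, card_filter]
  exact Finset.measurable_sum _ fun i _ =>
    Measurable.ite (measurableSet_lt (measurable_pi_apply i) (measurable_pi_apply j))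
      measurable_const measurable_const

theorem measurableSet_rank_lt (j : ι) (k : ℕ) : MeasurableSet {v : ι → α | rank v j < k} :=
  measurable_rank j measurableSet_Iio

theorem measure_rank_lt_eq (hX : Measurable X)
    (hexch : ∀ π : Equiv.Perm ι, μ.map (fun ω i => X ω (π i)) = μ.map X) (j j' : ι) (k : ℕ) :
    μ {ω | rank (X ω) j < k} = μ {ω | rank (X ω) j' < k} := by
  classical
  have hB := measurableSet_rank_lt (α := α) j' k
  have hπ : Measurable fun ω i => X ω (Equiv.swap j j' i) :=
    measurable_pi_lambda _ fun i => (measurable_pi_apply _).comp hX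
  have := congrArg (· {v | rank v j' < k}) (hexch (Equiv.swap j j'))
  rw [Measure.map_apply hπ hB, Measure.map_apply hX hB] at this
  simpa [Set.preimage, rank_comp_perm] using this

theorem sum_measure_rank_lt_le [IsProbabilityMeasure μ] (hX : Measurable X)
    (hinj : ∀ᵐ ω ∂μ, Function.Injective (X ω)) (k : ℕ) :
    ∑ j, μ {ω | rank (X ω) j < k} ≤ k := by
  classical
  have hE (j : ι) : MeasurableSet {ω | rank (X ω) j < k} := hX (measurableSet_rank_lt j k)
  calc ∑ j, μ {ω | rank (X ω) j < k}
      = ∑ j, ∫⁻ ω, {ω | rank (X ω) j < k}.indicator 1 ω ∂μ := by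
        simp only [lintegral_indicator_one (hE _)]
    _ = ∫⁻ ω, ∑ j, {ω | rank (X ω) j < k}.indicator 1 ω ∂μ :=
        (lintegral_finsetSum _ fun j _ => measurable_one.indicator (hE j)).symm
    _ ≤ ∫⁻ _, (k : ENNReal) ∂μ := by
        refine lintegral_mono_ae (hinj.mono fun ω hω => ?_)
        simp only [Set.indicator_apply, Pi.one_apply, sum_boole]
        exact_mod_cast card_rank_lt_le hω k
    _ = k := by simp

theorem card_mul_measureReal_rank_lt_le [IsProbabilityMeasure μ] (hX : Measurable X)
    (hexch : ∀ π : Equiv.Perm ι, μ.map (fun ω i => X ω (π i)) = μ.map X)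
    (hinj : ∀ᵐ ω ∂μ, Function.Injective (X ω)) (j : ι) (k : ℕ) :
    Fintype.card ι * μ.real {ω | rank (X ω) j < k} ≤ k := by
  have h := sum_measure_rank_lt_le hX hinj k
  simp only [measure_rank_lt_eq hX hexch _ j, sum_const, card_univ, nsmul_eq_mul] at h
  simpa [measureReal_def] using ENNReal.toReal_mono (ENNReal.natCast_ne_top k) h

end Exchangeable

end Conformal

open Conformal

theorem conformal_coverage_upper_bound_general
    {Ω : Type*} [MeasurableSpace Ω] (μ : Measure Ω) [IsProbabilityMeasure μ]
    (n : ℕ)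
    (S : Fin (n + 1) → Ω → ℝ) (hSmeas : ∀ i, Measurable (S i))
    (hexch : ∀ π : Equiv.Perm (Fin (n + 1)),
      Measure.map (fun ω => fun i => S (π i) ω) μ
        = Measure.map (fun ω => fun i => S i ω) μ)
    (hdistinct : ∀ᵐ ω ∂μ, Function.Injective (fun i : Fin (n + 1) => S i ω))
    (α : ℝ) (hα : α ∈ Set.Ioo (0 : ℝ) 1)
    (Q : Ω → ℝ)
    (hQ : ∀ ω, Q ω = sInf {x : ℝ |
      1 - α ≤ ((n : ℝ) + 1)⁻¹ *
        ((Finset.univ.filter (fun i : Fin (n + 1) => S i ω ≤ x)).card : ℝ)}) :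
    (μ {ω | S (Fin.last n) ω ≤ Q ω}).toReal ≤ 1 - α + 1 / ((n : ℝ) + 1) := by
  obtain ⟨hα0, hα1⟩ := hα
  have hpos : (0 : ℝ) < n + 1 := by positivity
  set k := ⌈(1 - α) * ((n : ℝ) + 1)⌉₊
  have hk1 : 1 ≤ k := Nat.one_le_ceil_iff.2 (mul_pos (by linarith) hpos)
  have hkn : k ≤ Fintype.card (Fin (n + 1)) := by
    rw [Fintype.card_fin, Nat.ceil_le]
    push_cast
    nlinarith
  have hcover : {ω | S (Fin.last n) ω ≤ Q ω} = {ω | rank (fun i => S i ω) (Fin.last n) < k} := by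
    ext ω
    have hT : {x : ℝ | 1 - α ≤ ((n : ℝ) + 1)⁻¹ *
        ((Finset.univ.filter (fun i : Fin (n + 1) => S i ω ≤ x)).card : ℝ)} =
        {x | k ≤ (Finset.univ.filter (fun i : Fin (n + 1) => S i ω ≤ x)).card} := by
      ext x
      rw [Set.mem_ofPred_eq, Set.mem_ofPred_eq, inv_mul_eq_div, le_div_iff₀ hpos, Nat.ceil_le]
    rw [Set.mem_ofPred_eq, hQ, hT]
    exact le_csInf_card_le_iff_rank_lt (fun i => S i ω) (Fin.last n) hk1 hkn
  have hbound := card_mul_measureReal_rank_lt_le (measurable_pi_lambda _ hSmeas) hexch hdistinct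
    (Fin.last n) k
  have hceil : (k : ℝ) < (1 - α) * (n + 1) + 1 := Nat.ceil_lt_add_one (by nlinarith)
  rw [← measureReal_def, hcover]
  rw [Fintype.card_fin, Nat.cast_add_one] at hbound
  refine le_of_mul_le_mul_left ?_ hpos
  rw [mul_add, mul_one_div_cancel hpos.ne']
  linarith

/-- Conformal prediction coverage upper bound: for exchangeable real-valued random
variables `S 0, …, S n` (with `n ≥ 1`) that are almost surely pairwise distinct, the
last one lies below the `1-α` empirical quantile of all `n+1` values with probability
at most `1 - α + 1/(n+1)`. -/
theorem conformal_coverage_upper_bound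
    {Ω : Type*} [MeasurableSpace Ω] (μ : Measure Ω) [IsProbabilityMeasure μ]
    (n : ℕ) (hn : 1 ≤ n)
    (S : Fin (n + 1) → Ω → ℝ) (hSmeas : ∀ i, Measurable (S i))
    (hexch : ∀ π : Equiv.Perm (Fin (n + 1)),
      Measure.map (fun ω => fun i => S (π i) ω) μ
        = Measure.map (fun ω => fun i => S i ω) μ)
    (hdistinct : ∀ᵐ ω ∂μ, Function.Injective (fun i : Fin (n + 1) => S i ω))
    (α : ℝ) (hα : α ∈ Set.Ioo (0 : ℝ) 1)
    (Q : Ω → ℝ)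
    (hQ : ∀ ω, Q ω = sInf {x : ℝ |
      1 - α ≤ ((n : ℝ) + 1)⁻¹ *
        ((Finset.univ.filter (fun i : Fin (n + 1) => S i ω ≤ x)).card : ℝ)}) :
    (μ {ω | S (Fin.last n) ω ≤ Q ω}).toReal ≤ 1 - α + 1 / ((n : ℝ) + 1) :=
  conformal_coverage_upper_bound_general μ n S hSmeas hexch hdistinct α hα Q hQ
end

section
/- Fix integers k ≥ 1 and T ≥ 1, reals η > 0 and σ with 0 < σ ≤ 1/2, and nonnegative losses ℓ_t^i ≥ 0 for 1 ≤ t ≤ T and 1 ≤ i ≤ k. Define weights recursively by w₁^i = 1 for all i, and w_{t+1}^i = (1−σ)·w_t^i·exp(−η ℓ_t^i) + (σ/k)·Σ_{j=1}^k w_t^j·exp(−η ℓ_t^j), and let p_t^i := w_t^i / Σ_{j=1}^k w_t^j. Then for every interval [r,s] ⊆ [1,T] and every 1 ≤ i ≤ k: Σ_{t=r}^s Σ_{j=1}^k p_t^j ℓ_t^j ≤ Σ_{t=r}^s ℓ_t^i + η·Σ_{t=r}^s Σ_{j=1}^k p_t^j (ℓ_t^j)² + (1/η)·(log(k/σ)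 + 2σ·(s−r+1)). -/
/-!
Potential argument for `W t = ∑ j, w t j`. The fixed-share mixing preserves total mass, so
`W (t + 1) = ∑ j, w t j * exp (-η * ℓ t j)`, and `exp (-x) ≤ 1 - x + x ^ 2`, `log y ≤ y - 1` give
`log W (t + 1) - log W t ≤ -η ∑ j, p t j * ℓ t j + η ^ 2 ∑ j, p t j * ℓ t j ^ 2`.
Conversely the mixing keeps every weight above the share `σ / k * W r`, and expert `i` loses at
most a factor `(1 - σ) * exp (-η * ℓ t i)` per step, so
`W (s + 1) ≥ w (s + 1) i ≥ σ / k * (1 - σ) ^ (s - r + 1) * exp (-η ∑ t, ℓ t i) * W r`.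
Comparing the two bounds on `log (W (s + 1) / W r)` and using `-log (1 - σ) ≤ 2σ` for `σ ≤ 1/2`
gives the claim.
-/

open Real Finset

lemma exp_neg_le_one_sub_add_sq {x : ℝ} (hx : 0 ≤ x) : exp (-x) ≤ 1 - x + x ^ 2 := by
  rw [exp_neg]
  calc (exp x)⁻¹ ≤ (1 + x)⁻¹ := inv_anti₀ (by positivity) (by linarith [add_one_le_exp x])
    _ ≤ 1 - x + x ^ 2 := by
      rw [inv_le_iff_one_le_mul₀ (by positivity)]
      nlinarith [pow_nonneg hx 3]

lemma neg_two_mul_le_log_one_sub {σ : ℝ} (hσ0 : 0 ≤ σ) (hσ : σ ≤ 1 / 2) :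
    -(2 * σ) ≤ log (1 - σ) := by
  have h1σ : 0 < 1 - σ := by linarith
  refine le_trans ?_ (one_sub_inv_le_log_of_pos h1σ)
  rw [le_sub_iff_add_le, ← le_sub_iff_add_le', inv_le_iff_one_le_mul₀ h1σ]
  nlinarith

theorem le_add_sum_Icc_of_succ_le {α : Type*} [AddCommMonoid α] [PartialOrder α]
    [IsOrderedAddMonoid α] {f g : ℕ → α} {r s : ℕ} (hrs : r ≤ s)
    (h : ∀ t ∈ Icc r s, f (t + 1) ≤ f t + g t) :
    f (s + 1) ≤ f r + ∑ t ∈ Icc r s, g t := by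
  induction s, hrs using Nat.le_induction with
  | base => simpa using h r (by simp)
  | succ n hrn ih =>
    rw [sum_Icc_succ_top (by omega), ← add_assoc]
    calc f (n + 1 + 1) ≤ f (n + 1) + g (n + 1) := h (n + 1) (by simp; omega)
      _ ≤ _ := add_le_add (ih fun t ht => h t (by simp at ht ⊢; omega)) le_rfl

variable {ι : Type*} [Fintype ι]

lemma sum_mul_exp_neg_mul_le {p ℓ : ι → ℝ} {η : ℝ} (hp : ∀ j, 0 ≤ p j) (hη : 0 ≤ η)
    (hℓ : ∀ j, 0 ≤ ℓ j) :
    ∑ j, p j * exp (-η * ℓ j)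
      ≤ ∑ j, p j - η * ∑ j, p j * ℓ j + η ^ 2 * ∑ j, p j * ℓ j ^ 2 := by
  calc ∑ j, p j * exp (-η * ℓ j) ≤ ∑ j, p j * (1 - η * ℓ j + (η * ℓ j) ^ 2) := by
        gcongr with j
        · exact hp j
        · simpa using exp_neg_le_one_sub_add_sq (mul_nonneg hη (hℓ j))
    _ = _ := by
        simp only [mul_sum, ← sum_sub_distrib, ← sum_add_distrib]
        exact sum_congr rfl fun j _ => by ring

noncomputable def fixedShare (σ : ℝ) (v : ι → ℝ) (i : ι) : ℝ :=
  (1 - σ) * v i + σ / Fintype.card ι * ∑ j, v j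

section fixedShare

variable {σ : ℝ} {v : ι → ℝ}

lemma sum_fixedShare [Nonempty ι] : ∑ i, fixedShare σ v i = ∑ i, v i := by
  have hcard : (Fintype.card ι : ℝ) ≠ 0 := by positivity
  simp only [fixedShare, sum_add_distrib, ← mul_sum, sum_const, card_univ, nsmul_eq_mul]
  field_simp
  ring

lemma one_sub_mul_le_fixedShare (hσ : 0 ≤ σ) (hv : ∀ j, 0 ≤ v j) (i : ι) :
    (1 - σ) * v i ≤ fixedShare σ v i :=
  le_add_of_nonneg_right (by have := sum_nonneg fun j (_ : j ∈ univ) => hv j; positivity)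

lemma share_le_fixedShare (hσ : σ ≤ 1) (hv : ∀ j, 0 ≤ v j) (i : ι) :
    σ / Fintype.card ι * ∑ j, v j ≤ fixedShare σ v i :=
  le_add_of_nonneg_left (mul_nonneg (by linarith) (hv i))

lemma fixedShare_pos (hσ0 : 0 ≤ σ) (hσ1 : σ < 1) (hv : ∀ j, 0 < v j) (i : ι) :
    0 < fixedShare σ v i :=
  (mul_pos (by linarith) (hv i)).trans_le (one_sub_mul_le_fixedShare hσ0 (fun j => (hv j).le) i)

end fixedShare

section weights

variable {σ η : ℝ} {ℓ w p : ℕ → ι → ℝ} {T r s : ℕ}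

lemma weight_pos_of_fixedShare
    (hw : ∀ t ∈ Icc 1 T, w (t + 1) = fixedShare σ fun j => w t j * exp (-η * ℓ t j))
    (hσ0 : 0 ≤ σ) (hσ1 : σ < 1) (hw1 : ∀ i, 0 < w 1 i) :
    ∀ t ∈ Icc 1 (T + 1), ∀ i, 0 < w t i := by
  intro t ht
  obtain ⟨ht1, htT⟩ := mem_Icc.1 ht
  induction t, ht1 using Nat.le_induction with
  | base => exact hw1
  | succ n hn ih =>
    rw [hw n (mem_Icc.2 ⟨hn, by omega⟩)]
    exact fixedShare_pos hσ0 hσ1 fun j =>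
      mul_pos (ih (mem_Icc.2 ⟨hn, by omega⟩) (by omega) j) (exp_pos _)

lemma log_sum_weight_succ_le [Nonempty ι]
    (hw : ∀ t ∈ Icc 1 T, w (t + 1) = fixedShare σ fun j => w t j * exp (-η * ℓ t j))
    (hp : ∀ t i, p t i = w t i / ∑ j, w t j) {t : ℕ} (ht : t ∈ Icc 1 T)
    (hwt : ∀ j, 0 < w t j) (hη : 0 ≤ η) (hℓ : ∀ j, 0 ≤ ℓ t j) :
    log (∑ j, w (t + 1) j) ≤ log (∑ j, w t j)
      + (-η * ∑ j, p t j * ℓ t j + η ^ 2 * ∑ j, p t j * ℓ t j ^ 2) := by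
  have hW : 0 < ∑ j, w t j := sum_pos (fun j _ => hwt j) univ_nonempty
  have hpt : ∀ j, 0 < p t j := fun j => by rw [hp]; exact div_pos (hwt j) hW
  have hsum_p : ∑ j, p t j = 1 := by simp only [hp, ← sum_div, div_self hW.ne']
  have hsum_succ : ∑ j, w (t + 1) j = (∑ j, w t j) * ∑ j, p t j * exp (-η * ℓ t j) := by
    rw [hw t ht, sum_fixedShare, mul_sum]
    refine sum_congr rfl fun j _ => ?_
    rw [hp]
    field_simp
  have hmix : 0 < ∑ j, p t j * exp (-η * ℓ t j) :=
    sum_pos (fun j _ => mul_pos (hpt j) (exp_pos _)) univ_nonempty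
  rw [hsum_succ, log_mul hW.ne' hmix.ne']
  have := sum_mul_exp_neg_mul_le (fun j => (hpt j).le) hη hℓ
  linarith [log_le_sub_one_of_pos hmix]

lemma log_sum_weight_le [Nonempty ι]
    (hw : ∀ t ∈ Icc 1 T, w (t + 1) = fixedShare σ fun j => w t j * exp (-η * ℓ t j))
    (hp : ∀ t i, p t i = w t i / ∑ j, w t j) (hpos : ∀ t ∈ Icc 1 (T + 1), ∀ i, 0 < w t i)
    (hη : 0 ≤ η) (hℓ : ∀ t ∈ Icc 1 T, ∀ j, 0 ≤ ℓ t j) (hr : 1 ≤ r) (hrs : r ≤ s) (hs : s ≤ T) :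
    log (∑ j, w (s + 1) j) ≤ log (∑ j, w r j) - η * ∑ t ∈ Icc r s, ∑ j, p t j * ℓ t j
      + η ^ 2 * ∑ t ∈ Icc r s, ∑ j, p t j * ℓ t j ^ 2 := by
  have := le_add_sum_Icc_of_succ_le (f := fun t => log (∑ j, w t j)) hrs fun t ht => by
    obtain ⟨hrt, hts⟩ := mem_Icc.1 ht
    have htT : t ∈ Icc 1 T := mem_Icc.2 ⟨by omega, by omega⟩
    exact log_sum_weight_succ_le hw hp htT (hpos t (mem_Icc.2 ⟨by omega, by omega⟩)) hη (hℓ t htT)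
  simp only [sum_add_distrib, ← mul_sum] at this
  linarith

lemma log_weight_ge
    (hw : ∀ t ∈ Icc 1 T, w (t + 1) = fixedShare σ fun j => w t j * exp (-η * ℓ t j))
    (hσ0 : 0 ≤ σ) (hσ1 : σ < 1) (hpos : ∀ t ∈ Icc 1 (T + 1), ∀ i, 0 < w t i)
    (hr : 1 ≤ r) (hrs : r ≤ s) (hs : s ≤ T) (i : ι) :
    log (w r i) + ((s : ℝ) - r + 1) * log (1 - σ) - η * ∑ t ∈ Icc r s, ℓ t i
      ≤ log (w (s + 1) i) := by
  have h1σ : 0 < 1 - σ := by linarith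
  have := le_add_sum_Icc_of_succ_le (f := fun t => -log (w t i))
    (g := fun t => -log (1 - σ) + η * ℓ t i) hrs fun t ht => by
    obtain ⟨hrt, hts⟩ := mem_Icc.1 ht
    have hwt : ∀ j, 0 < w t j := hpos t (mem_Icc.2 ⟨by omega, by omega⟩)
    have hstep := one_sub_mul_le_fixedShare (v := fun j => w t j * exp (-η * ℓ t j)) hσ0
      (fun j => (mul_pos (hwt j) (exp_pos _)).le) i
    rw [← hw t (mem_Icc.2 ⟨by omega, by omega⟩)] at hstep
    have hwti : 0 < w t i * exp (-η * ℓ t i) := mul_pos (hwt i) (exp_pos _)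
    have := log_le_log (mul_pos h1σ hwti) hstep
    rw [log_mul h1σ.ne' hwti.ne', log_mul (hwt i).ne' (exp_pos _).ne', log_exp] at this
    linarith
  rw [sum_add_distrib, sum_const, Nat.card_Icc, ← mul_sum, nsmul_eq_mul,
    Nat.cast_sub (by omega), Nat.cast_add, Nat.cast_one] at this
  linarith

lemma share_le_weight [Nonempty ι]
    (hw : ∀ t ∈ Icc 1 T, w (t + 1) = fixedShare σ fun j => w t j * exp (-η * ℓ t j))
    (hσ : σ ≤ 1) (hpos : ∀ t ∈ Icc 1 (T + 1), ∀ i, 0 < w t i) (hw1 : ∀ i, w 1 i = 1)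
    {t : ℕ} (ht : t ∈ Icc 1 (T + 1)) (i : ι) :
    σ / Fintype.card ι * ∑ j, w t j ≤ w t i := by
  obtain ⟨ht1, htT⟩ := mem_Icc.1 ht
  rcases eq_or_ne t 1 with rfl | ht1'
  · simp [hw1, hσ]
  · obtain ⟨n, rfl⟩ : ∃ n, t = n + 1 := ⟨t - 1, by omega⟩
    have hn : n ∈ Icc 1 T := mem_Icc.2 ⟨by omega, by omega⟩
    rw [hw n hn, sum_fixedShare]
    exact share_le_fixedShare hσ (fun j => (mul_pos (hpos n (mem_Icc.2 ⟨by omega, by omega⟩) j)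
      (exp_pos _)).le) i

theorem mul_sum_expected_loss_le [Nonempty ι]
    (hw : ∀ t ∈ Icc 1 T, w (t + 1) = fixedShare σ fun j => w t j * exp (-η * ℓ t j))
    (hp : ∀ t i, p t i = w t i / ∑ j, w t j) (hw1 : ∀ i, w 1 i = 1)
    (hη : 0 ≤ η) (hσ0 : 0 < σ) (hσ : σ ≤ 1 / 2) (hℓ : ∀ t ∈ Icc 1 T, ∀ j, 0 ≤ ℓ t j)
    (hr : 1 ≤ r) (hrs : r ≤ s) (hs : s ≤ T) (i : ι) :
    η * ∑ t ∈ Icc r s, ∑ j, p t j * ℓ t j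
      ≤ η * ∑ t ∈ Icc r s, ℓ t i + η ^ 2 * ∑ t ∈ Icc r s, ∑ j, p t j * ℓ t j ^ 2
        + (log (Fintype.card ι / σ) + 2 * σ * ((s : ℝ) - r + 1)) := by
  have hσ1 : σ < 1 := by linarith
  have hpos := weight_pos_of_fixedShare hw hσ0.le hσ1 fun i => by rw [hw1]; exact one_pos
  have hr_mem : r ∈ Icc 1 (T + 1) := mem_Icc.2 ⟨hr, by omega⟩
  have hs_mem : s + 1 ∈ Icc 1 (T + 1) := mem_Icc.2 ⟨by omega, by omega⟩
  have hWr : 0 < ∑ j, w r j := sum_pos (fun j _ => hpos r hr_mem j) univ_nonempty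
  have hshare : log (σ / Fintype.card ι) + log (∑ j, w r j) ≤ log (w r i) := by
    rw [← log_mul (by positivity) hWr.ne']
    exact log_le_log (by positivity) (share_le_weight hw hσ1.le hpos hw1 hr_mem i)
  have hlast : log (w (s + 1) i) ≤ log (∑ j, w (s + 1) j) :=
    log_le_log (hpos _ hs_mem i) (single_le_sum (fun j _ => (hpos _ hs_mem j).le) (mem_univ i))
  have hlower := log_weight_ge hw hσ0.le hσ1 hpos hr hrs hs i
  have hupper := log_sum_weight_le hw hp hpos hη hℓ hr hrs hs
  have hlog1σ : ((s : ℝ) - r + 1) * -(2 * σ) ≤ ((s : ℝ) - r + 1) * log (1 - σ) :=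
    mul_le_mul_of_nonneg_left (neg_two_mul_le_log_one_sub hσ0.le hσ)
      (by linarith [(Nat.cast_le (α := ℝ)).2 hrs])
  have hcard : (0 : ℝ) < Fintype.card ι := by positivity
  rw [log_div hσ0.ne' hcard.ne'] at hshare
  rw [log_div hcard.ne' hσ0.ne']
  linarith

end weights

theorem fixed_share_regret_bound_general
    (k T : ℕ) (hk : 1 ≤ k)
    (η σ : ℝ) (hη : 0 < η) (hσ0 : 0 < σ) (hσ : σ ≤ 1 / 2)
    (ℓ : ℕ → Fin k → ℝ) (hℓ : ∀ t, 1 ≤ t → t ≤ T → ∀ i, 0 ≤ ℓ t i)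
    (w : ℕ → Fin k → ℝ)
    (hw1 : ∀ i, w 1 i = 1)
    (hwrec : ∀ t, 1 ≤ t → t ≤ T → ∀ i,
      w (t + 1) i = (1 - σ) * w t i * Real.exp (-η * ℓ t i)
        + σ / k * ∑ j, w t j * Real.exp (-η * ℓ t j))
    (p : ℕ → Fin k → ℝ)
    (hp : ∀ t i, p t i = w t i / ∑ j, w t j)
    (r s : ℕ) (hr : 1 ≤ r) (hrs : r ≤ s) (hs : s ≤ T) (i : Fin k) :
    ∑ t ∈ Finset.Icc r s, ∑ j, p t j * ℓ t j
      ≤ ∑ t ∈ Finset.Icc r s, ℓ t i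
        + η * ∑ t ∈ Finset.Icc r s, ∑ j, p t j * (ℓ t j) ^ 2
        + (1 / η) * (Real.log ((k : ℝ) / σ) + 2 * σ * ((s : ℝ) - (r : ℝ) + 1)) := by
  have : Nonempty (Fin k) := Fin.pos_iff_nonempty.mp hk
  have hw : ∀ t ∈ Icc 1 T, w (t + 1) = fixedShare σ fun j => w t j * exp (-η * ℓ t j) := by
    intro t ht
    funext j
    rw [hwrec t (mem_Icc.1 ht).1 (mem_Icc.1 ht).2, fixedShare, Fintype.card_fin]
    ring
  have key := mul_sum_expected_loss_le hw hp hw1 hη.le hσ0 hσ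
    (fun t ht => hℓ t (mem_Icc.1 ht).1 (mem_Icc.1 ht).2) hr hrs hs i
  rw [Fintype.card_fin] at key
  refine le_of_mul_le_mul_left (key.trans_eq ?_) hη
  field_simp

/-- Fixed-share exponential reweighting regret bound (Lemma 1 of the paper):
the expected loss of the aggregation over any interval `[r, s] ⊆ [1, T]` is bounded
by the loss of any fixed expert `i`, plus `η` times the expected squared loss, plus
`(1/η)·(log(k/σ) + 2σ|I|)`. -/
theorem fixed_share_regret_bound
    (k T : ℕ) (hk : 1 ≤ k) (hT : 1 ≤ T)
    (η σ : ℝ) (hη : 0 < η) (hσ0 : 0 < σ) (hσ : σ ≤ 1 / 2)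
    (ℓ : ℕ → Fin k → ℝ) (hℓ : ∀ t, 1 ≤ t → t ≤ T → ∀ i, 0 ≤ ℓ t i)
    (w : ℕ → Fin k → ℝ)
    (hw1 : ∀ i, w 1 i = 1)
    (hwrec : ∀ t, 1 ≤ t → t ≤ T → ∀ i,
      w (t + 1) i = (1 - σ) * w t i * Real.exp (-η * ℓ t i)
        + σ / k * ∑ j, w t j * Real.exp (-η * ℓ t j))
    (p : ℕ → Fin k → ℝ)
    (hp : ∀ t i, p t i = w t i / ∑ j, w t j)
    (r s : ℕ) (hr : 1 ≤ r) (hrs : r ≤ s) (hs : s ≤ T) (i : Fin k) :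
    ∑ t ∈ Finset.Icc r s, ∑ j, p t j * ℓ t j
      ≤ ∑ t ∈ Finset.Icc r s, ℓ t i
        + η * ∑ t ∈ Finset.Icc r s, ∑ j, p t j * (ℓ t j) ^ 2
        + (1 / η) * (Real.log ((k : ℝ) / σ) + 2 * σ * ((s : ℝ) - (r : ℝ) + 1)) :=
  fixed_share_regret_bound_general k T hk η σ hη hσ0 hσ ℓ hℓ w hw1 hwrec p hp r s hr hrs hs i
end

section
/- Fix α ∈ (0,1), γ > 0, and a sequence β₁,…,β_T ∈ [0,1]. Define α₁ ∈ [0,1] and α_{t+1} := α_t + γ·(α − 1{β_t < α_t}) for t ≥ 1. Then for every interval [r,s] ⊆ [1,T] and every sequence α*_r,…,α*_s ∈ [0,1]: Σ_{t=r}^s ℓ(β_t, α_t) − Σ_{t=r}^s ℓ(β_t, α*_t) ≤ (3/(2γ))·(1+γ)²·(Σ_{t=r+1}^s |α*_t − α*_{t−1}| + 1) + (γ/2)·(s−r+1). -/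
/-!
Each ACI step is a gradient step along `1{β < a} − α`, a subgradient of the pinball loss of absolute
value at most one, so the usual online-gradient-descent estimate bounds `2γ` times the instantaneous
regret against `u` by `(a − u)² − (a' − u)² + γ²`. Summing, the squared distances telescope except
where the comparator moves; since the iterates never leave `[−γ, 1 + γ]`, moving the comparator from
`u` to `u'` costs at most `2(1 + γ)|u' − u|`, and the first distance is at most `(1 + γ)²`.
-/

/-- The pinball (quantile) loss at level `α`: `ℓ(β, θ) = α(β − θ) − min{0, β − θ}`. -/
noncomputable def pinball (α β θ : ℝ) : ℝ := α * (β - θ) - min 0 (β - θ)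

open Finset

lemma pinball_sub_pinball_le (α b x u : ℝ) :
    pinball α b x - pinball α b u ≤ ((if b < x then 1 else 0) - α) * (x - u) := by
  unfold pinball
  rcases min_cases 0 (b - x) with ⟨h1, h1'⟩ | ⟨h1, h1'⟩ <;>
  rcases min_cases 0 (b - u) with ⟨h2, h2'⟩ | ⟨h2, h2'⟩ <;>
  split_ifs <;> nlinarith

lemma two_mul_pinball_sub_pinball_le {α γ : ℝ} (hα : α ∈ Set.Icc 0 1) (hγ : 0 ≤ γ) (b x u : ℝ) :
    2 * γ * (pinball α b x - pinball α b u) ≤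
      (x - u) ^ 2 - (x + γ * (α - if b < x then 1 else 0) - u) ^ 2 + γ ^ 2 := by
  set g : ℝ := (if b < x then 1 else 0) - α
  have hg : g ^ 2 ≤ 1 := by
    obtain ⟨hα0, hα1⟩ := hα
    simp only [g]; split_ifs <;> nlinarith
  have hsub := mul_le_mul_of_nonneg_left (pinball_sub_pinball_le α b x u) (by positivity : 0 ≤ 2 * γ)
  have hupdate : x + γ * (α - if b < x then 1 else 0) = x - γ * g := by simp only [g]; ring
  rw [hupdate]
  nlinarith [mul_le_mul_of_nonneg_left hg (sq_nonneg γ)]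

lemma sq_sub_sub_sq_sub_le {x u u' D : ℝ} (hu : |x - u| ≤ D) (hu' : |x - u'| ≤ D) :
    (x - u') ^ 2 - (x - u) ^ 2 ≤ 2 * D * |u' - u| := by
  have hfactor : (x - u') ^ 2 - (x - u) ^ 2 = (u - u') * ((x - u) + (x - u')) := by ring
  calc (x - u') ^ 2 - (x - u) ^ 2 ≤ |u - u'| * |(x - u) + (x - u')| := by
        rw [hfactor, ← abs_mul]; exact le_abs_self _
    _ ≤ |u' - u| * (2 * D) := by
        rw [abs_sub_comm]
        gcongr
        linarith [abs_add_le (x - u) (x - u')]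
    _ = 2 * D * |u' - u| := by ring

lemma aci_step_mem_Icc {α γ b x : ℝ} (hα : α ∈ Set.Icc 0 1) (hγ : 0 ≤ γ) (hb : b ∈ Set.Icc 0 1)
    (hx : x ∈ Set.Icc (-γ) (1 + γ)) :
    x + γ * (α - if b < x then 1 else 0) ∈ Set.Icc (-γ) (1 + γ) := by
  obtain ⟨hα0, hα1⟩ := hα
  obtain ⟨hb0, hb1⟩ := hb
  obtain ⟨hx0, hx1⟩ := hx
  split_ifs with hbx
  · exact ⟨by nlinarith, by nlinarith⟩
  · exact ⟨by nlinarith, by nlinarith⟩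

lemma abs_sub_le_of_mem_Icc {γ x u : ℝ} (hx : x ∈ Set.Icc (-γ) (1 + γ)) (hu : u ∈ Set.Icc 0 1) :
    |x - u| ≤ 1 + γ :=
  abs_sub_le_iff.2 ⟨by linarith [hx.2, hu.1], by linarith [hx.1, hu.2]⟩

lemma sum_Icc_le_of_le_sub {c d e p : ℕ → ℝ} {r s : ℕ} (hrs : r ≤ s)
    (hstep : ∀ t ∈ Icc r s, c t ≤ d t - e t)
    (hshift : ∀ t ∈ Ico r s, d (t + 1) - e t ≤ p (t + 1)) :
    ∑ t ∈ Icc r s, c t ≤ d r - e s + ∑ t ∈ Icc (r + 1) s, p t := by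
  induction s, hrs using Nat.le_induction with
  | base => simpa using hstep r (by simp)
  | succ n hrn ih =>
    have ih' := ih (fun t ht => hstep t (by simp at ht ⊢; omega))
      (fun t ht => hshift t (by simp at ht ⊢; omega))
    have hlast := hstep (n + 1) (by simp; omega)
    have hmove := hshift n (by simp; omega)
    rw [sum_Icc_succ_top (by omega), sum_Icc_succ_top (by omega)]
    linarith

lemma aci_mem_Icc {α γ : ℝ} (hα : α ∈ Set.Icc 0 1) (hγ : 0 ≤ γ) {T : ℕ} {β a : ℕ → ℝ}
    (hβ : ∀ t, 1 ≤ t → t ≤ T → β t ∈ Set.Icc 0 1) (ha1 : a 1 ∈ Set.Icc 0 1)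
    (harec : ∀ t, 1 ≤ t → a (t + 1) = a t + γ * (α - if β t < a t then 1 else 0)) :
    ∀ t, 1 ≤ t → t ≤ T + 1 → a t ∈ Set.Icc (-γ) (1 + γ) := by
  intro t ht
  induction t, ht using Nat.le_induction with
  | base => exact fun _ => ⟨by linarith [ha1.1], by linarith [ha1.2]⟩
  | succ n hn ih =>
    intro hnT
    rw [harec n hn]
    exact aci_step_mem_Icc hα hγ (hβ n hn (by omega)) (ih (by omega))

lemma aci_two_mul_regret_le {α γ : ℝ} (hα : α ∈ Set.Icc 0 1) (hγ : 0 ≤ γ) {T : ℕ} {β a : ℕ → ℝ}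
    (hβ : ∀ t, 1 ≤ t → t ≤ T → β t ∈ Set.Icc 0 1) (ha1 : a 1 ∈ Set.Icc 0 1)
    (harec : ∀ t, 1 ≤ t → a (t + 1) = a t + γ * (α - if β t < a t then 1 else 0))
    {r s : ℕ} (hr : 1 ≤ r) (hrs : r ≤ s) (hs : s ≤ T)
    {u : ℕ → ℝ} (hu : ∀ t, r ≤ t → t ≤ s → u t ∈ Set.Icc 0 1) :
    2 * γ * ∑ t ∈ Icc r s, (pinball α (β t) (a t) - pinball α (β t) (u t))
      ≤ (1 + γ) ^ 2 + 2 * (1 + γ) * ∑ t ∈ Icc (r + 1) s, |u t - u (t - 1)|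
        + γ ^ 2 * ((s : ℝ) - r + 1) := by
  have hbdd := aci_mem_Icc hα hγ hβ ha1 harec
  have htel := sum_Icc_le_of_le_sub (c := fun t => 2 * γ * (pinball α (β t) (a t) -
      pinball α (β t) (u t)) - γ ^ 2) (d := fun t => (a t - u t) ^ 2)
    (e := fun t => (a (t + 1) - u t) ^ 2) (p := fun t => 2 * (1 + γ) * |u t - u (t - 1)|) hrs
    (fun t ht => by
      obtain ⟨hrt, hts⟩ := mem_Icc.1 ht
      have := two_mul_pinball_sub_pinball_le hα hγ (β t) (a t) (u t)
      rw [← harec t (by omega)] at this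
      linarith)
    (fun t ht => by
      obtain ⟨hrt, hts⟩ := mem_Ico.1 ht
      have hat := hbdd (t + 1) (by omega) (by omega)
      simpa using sq_sub_sub_sq_sub_le (abs_sub_le_of_mem_Icc hat (hu t hrt (by omega)))
        (abs_sub_le_of_mem_Icc hat (hu (t + 1) (by omega) (by omega))))
  have hfirst : (a r - u r) ^ 2 ≤ (1 + γ) ^ 2 := by
    rw [← sq_abs]
    exact pow_le_pow_left₀ (abs_nonneg _)
      (abs_sub_le_of_mem_Icc (hbdd r hr (by omega)) (hu r le_rfl hrs)) 2
  have hcard : (#(Icc r s) : ℝ) = (s : ℝ) - r + 1 := by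
    rw [Nat.card_Icc, Nat.cast_sub (by omega)]; push_cast; ring
  rw [sum_sub_distrib, sum_const, nsmul_eq_mul, hcard, ← mul_sum, ← mul_sum] at htel
  nlinarith [sq_nonneg (a (s + 1) - u s)]

theorem aci_dynamic_regret_bound_general
    (α γ : ℝ) (hα : α ∈ Set.Ioo (0 : ℝ) 1) (hγ : 0 < γ)
    (T : ℕ)
    (β : ℕ → ℝ) (hβ : ∀ t, 1 ≤ t → t ≤ T → β t ∈ Set.Icc (0 : ℝ) 1)
    (a : ℕ → ℝ) (ha1 : a 1 ∈ Set.Icc (0 : ℝ) 1)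
    (harec : ∀ t, 1 ≤ t →
      a (t + 1) = a t + γ * (α - if β t < a t then 1 else 0))
    (r s : ℕ) (hr : 1 ≤ r) (hrs : r ≤ s) (hs : s ≤ T)
    (astar : ℕ → ℝ) (hastar : ∀ t, r ≤ t → t ≤ s → astar t ∈ Set.Icc (0 : ℝ) 1) :
    ∑ t ∈ Finset.Icc r s, pinball α (β t) (a t)
      - ∑ t ∈ Finset.Icc r s, pinball α (β t) (astar t)
    ≤ (3 / (2 * γ)) * (1 + γ) ^ 2
        * ((∑ t ∈ Finset.Icc (r + 1) s, |astar t - astar (t - 1)|) + 1)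
      + (γ / 2) * ((s : ℝ) - (r : ℝ) + 1) := by
  have hscaled := aci_two_mul_regret_le (Set.Ioo_subset_Icc_self hα) hγ.le hβ ha1 harec hr hrs hs
    hastar
  set P := ∑ t ∈ Icc (r + 1) s, |astar t - astar (t - 1)|
  have hP : 0 ≤ P := sum_nonneg fun t _ => abs_nonneg _
  rw [← sum_sub_distrib, ← mul_le_mul_iff_right₀ (by positivity : 0 < 2 * γ)]
  have hrhs : 2 * γ * ((3 / (2 * γ)) * (1 + γ) ^ 2 * (P + 1) + (γ / 2) * ((s : ℝ) - r + 1))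
      = 3 * (1 + γ) ^ 2 * (P + 1) + γ ^ 2 * ((s : ℝ) - r + 1) := by
    field_simp
  rw [hrhs]
  have hcoeff : 2 * (1 + γ) ≤ 3 * (1 + γ) ^ 2 := by nlinarith
  nlinarith [mul_le_mul_of_nonneg_left hcoeff hP]

/-- Dynamic regret bound for online gradient descent on the pinball loss
(the ACI update), Lemma 2 of the paper. -/
theorem aci_dynamic_regret_bound
    (α γ : ℝ) (hα : α ∈ Set.Ioo (0 : ℝ) 1) (hγ : 0 < γ)
    (T : ℕ) (hT : 1 ≤ T)
    (β : ℕ → ℝ) (hβ : ∀ t, 1 ≤ t → t ≤ T → β t ∈ Set.Icc (0 : ℝ) 1)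
    (a : ℕ → ℝ) (ha1 : a 1 ∈ Set.Icc (0 : ℝ) 1)
    (harec : ∀ t, 1 ≤ t →
      a (t + 1) = a t + γ * (α - if β t < a t then 1 else 0))
    (r s : ℕ) (hr : 1 ≤ r) (hrs : r ≤ s) (hs : s ≤ T)
    (astar : ℕ → ℝ) (hastar : ∀ t, r ≤ t → t ≤ s → astar t ∈ Set.Icc (0 : ℝ) 1) :
    ∑ t ∈ Finset.Icc r s, pinball α (β t) (a t)
      - ∑ t ∈ Finset.Icc r s, pinball α (β t) (astar t)
    ≤ (3 / (2 * γ)) * (1 + γ) ^ 2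
        * ((∑ t ∈ Finset.Icc (r + 1) s, |astar t - astar (t - 1)|) + 1)
      + (γ / 2) * ((s : ℝ) - (r : ℝ) + 1) :=
  aci_dynamic_regret_bound_general α γ hα hγ T β hβ a ha1 harec r s hr hrs hs astar hastar
end

section
/- Fix α ∈ (0,1). Let β be a real-valued random variable supported on [0,1] with a density q(·) on [0,1] satisfying q(x) ≥ p > 0 for all x ∈ [0,1], and let α* ∈ [0,1] satisfy ℙ(β < α*) = α. Then for every τ ∈ [0,1]: E[ℓ(β,τ)] − E[ℓ(β,α*)] ≥ p·(τ − α*)²/2. -/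
open MeasureTheory

/-!
Expanding `θ ↦ ℓ(b, θ)` to first order at `a = α*` with the subgradient `1{b < a} − α` leaves a
nonnegative remainder `R(b)`, equal to `|b − τ|` for `b` between `a` and `τ` and to `0` elsewhere.
The subgradient term has mean `(τ − a)(ℙ(β < a) − α) = 0`, so the excess loss is `E[R(β)]`.
Since the law of `β` dominates `p` times Lebesgue measure on `[0,1]`,
`E[R(β)] ≥ p ∫ R = p (τ − a)² / 2`.
-/

open Set

noncomputable def pinballRemainder (a τ b : ℝ) : ℝ :=
  (Ico a τ).indicator (fun x => τ - x) b + (Ico τ a).indicator (fun x => x - τ) b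

lemma continuous_pinball (α θ : ℝ) : Continuous fun b => pinball α b θ := by
  unfold pinball
  fun_prop

lemma pinball_sub_pinball (α a τ b : ℝ) :
    pinball α b τ - pinball α b a
      = (τ - a) * ((Iio a).indicator 1 b - α) + pinballRemainder a τ b := by
  simp only [pinball, pinballRemainder, indicator, mem_Ico, mem_Iio, Pi.one_apply, min_def]
  split_ifs <;> grind

lemma pinballRemainder_nonneg (a τ b : ℝ) : 0 ≤ pinballRemainder a τ b := by
  unfold pinballRemainder
  refine add_nonneg (indicator_nonneg (fun x hx => ?_) b) (indicator_nonneg (fun x hx => ?_) b)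
  · linarith [hx.2]
  · linarith [hx.1]

lemma pinballRemainder_eq_zero_of_notMem_uIcc {a τ b : ℝ} (hb : b ∉ uIcc a τ) :
    pinballRemainder a τ b = 0 := by
  rw [pinballRemainder, indicator_of_notMem fun h => hb (Icc_subset_uIcc (Ico_subset_Icc_self h)),
    indicator_of_notMem fun h => hb (Icc_subset_uIcc' (Ico_subset_Icc_self h)), add_zero]

lemma integrable_indicator_Ico {μ : Measure ℝ} [IsFiniteMeasureOnCompacts μ] {f : ℝ → ℝ}
    (hf : Continuous f) (lo hi : ℝ) : Integrable ((Ico lo hi).indicator f) μ :=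
  (integrable_indicator_iff measurableSet_Ico).2 (hf.integrableOn_Icc.mono_set Ico_subset_Icc_self)

lemma integrable_pinballRemainder (μ : Measure ℝ) [IsFiniteMeasureOnCompacts μ] (a τ : ℝ) :
    Integrable (pinballRemainder a τ) μ :=
  (integrable_indicator_Ico (by fun_prop) a τ).add (integrable_indicator_Ico (by fun_prop) τ a)

lemma setIntegral_Ico_sub_left {lo hi : ℝ} (h : lo ≤ hi) :
    ∫ x in Ico lo hi, (hi - x) = (hi - lo) ^ 2 / 2 := by
  rw [integral_Ico_eq_integral_Ioo, ← integral_Ioc_eq_integral_Ioo,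
    ← intervalIntegral.integral_of_le h, intervalIntegral.integral_comp_sub_left (fun x => x)]
  simp

lemma setIntegral_Ico_sub_right {lo hi : ℝ} (h : lo ≤ hi) :
    ∫ x in Ico lo hi, (x - lo) = (hi - lo) ^ 2 / 2 := by
  rw [integral_Ico_eq_integral_Ioo, ← integral_Ioc_eq_integral_Ioo,
    ← intervalIntegral.integral_of_le h]
  simp only [intervalIntegral.integral_sub intervalIntegral.intervalIntegrable_id
    intervalIntegrable_const, integral_id, intervalIntegral.integral_const, smul_eq_mul]
  ring

lemma integral_pinballRemainder (a τ : ℝ) : ∫ x, pinballRemainder a τ x = (τ - a) ^ 2 / 2 := by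
  unfold pinballRemainder
  rw [integral_add (integrable_indicator_Ico (by fun_prop) a τ)
      (integrable_indicator_Ico (by fun_prop) τ a),
    integral_indicator measurableSet_Ico, integral_indicator measurableSet_Ico]
  rcases le_total a τ with h | h
  · rw [Ico_eq_empty h.not_gt, Measure.restrict_empty, integral_zero_measure,
      setIntegral_Ico_sub_left h, add_zero]
  · rw [Ico_eq_empty h.not_gt, Measure.restrict_empty, integral_zero_measure,
      setIntegral_Ico_sub_right h, zero_add]
    ring

lemma setIntegral_pinballRemainder {a τ : ℝ} {s : Set ℝ} (hs : uIcc a τ ⊆ s) :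
    ∫ x in s, pinballRemainder a τ x = (τ - a) ^ 2 / 2 := by
  rw [setIntegral_eq_integral_of_forall_compl_eq_zero fun x hx =>
    pinballRemainder_eq_zero_of_notMem_uIcc fun h => hx (hs h), integral_pinballRemainder]

lemma integral_pinball_sub_integral_pinball {ν : Measure ℝ} [IsProbabilityMeasure ν]
    {α a τ : ℝ} (hα : ν.real (Iio a) = α) (hτ : Integrable (fun b => pinball α b τ) ν)
    (ha : Integrable (fun b => pinball α b a) ν) :
    ∫ b, pinball α b τ ∂ν - ∫ b, pinball α b a ∂ν = ∫ b, pinballRemainder a τ b ∂ν := by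
  have hind : Integrable ((Iio a).indicator (1 : ℝ → ℝ)) ν :=
    (integrable_const 1).indicator measurableSet_Iio
  have hlinear_int : Integrable (fun b => (τ - a) * ((Iio a).indicator 1 b - α)) ν :=
    (hind.sub (integrable_const α)).const_mul _
  have hlinear : ∫ b, (τ - a) * ((Iio a).indicator 1 b - α) ∂ν = 0 := by
    rw [integral_const_mul, integral_sub hind (integrable_const α),
      integral_indicator_one measurableSet_Iio, hα, integral_const]
    simp
  rw [← integral_sub hτ ha]
  simp_rw [pinball_sub_pinball]
  rw [integral_add hlinear_int (integrable_pinballRemainder ν a τ), hlinear, zero_add]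

lemma mul_sq_div_two_le_integral_pinballRemainder {ν : Measure ℝ} [IsFiniteMeasure ν]
    {p a τ : ℝ} {s : Set ℝ} (hp : 0 ≤ p) (hν : ENNReal.ofReal p • volume.restrict s ≤ ν)
    (hs : uIcc a τ ⊆ s) :
    p * (τ - a) ^ 2 / 2 ≤ ∫ b, pinballRemainder a τ b ∂ν :=
  calc p * (τ - a) ^ 2 / 2
        = ∫ b, pinballRemainder a τ b ∂(ENNReal.ofReal p • volume.restrict s) := by
        rw [integral_smul_measure, ENNReal.toReal_ofReal hp, setIntegral_pinballRemainder hs,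
          smul_eq_mul, mul_div_assoc]
    _ ≤ ∫ b, pinballRemainder a τ b ∂ν :=
        integral_mono_measure hν (ae_of_all _ (pinballRemainder_nonneg a τ))
          (integrable_pinballRemainder ν a τ)

theorem pinball_excess_loss_quadratic_lower_bound_general
    {Ω : Type*} [MeasurableSpace Ω] (μ : Measure Ω) [IsProbabilityMeasure μ]
    (α : ℝ)
    (β : Ω → ℝ) (hβmeas : Measurable β)
    (q : ℝ → ℝ)
    (hlaw : Measure.map β μ
      = (volume.restrict (Set.Icc (0 : ℝ) 1)).withDensity
          (fun x => ENNReal.ofReal (q x)))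
    (p : ℝ) (hp : 0 < p) (hq : ∀ x ∈ Set.Icc (0 : ℝ) 1, p ≤ q x)
    (αstar : ℝ) (hαstarmem : αstar ∈ Set.Icc (0 : ℝ) 1)
    (hαstar : (μ {ω | β ω < αstar}).toReal = α)
    (τ : ℝ) (hτ : τ ∈ Set.Icc (0 : ℝ) 1) :
    p * (τ - αstar) ^ 2 / 2
      ≤ (∫ ω, pinball α (β ω) τ ∂μ) - (∫ ω, pinball α (β ω) αstar ∂μ) := by
  set ν := Measure.map β μ
  have : IsProbabilityMeasure ν := Measure.isProbabilityMeasure_map hβmeas.aemeasurable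
  have hsupp : ∀ᵐ x ∂ν, x ∈ Icc (0 : ℝ) 1 := hlaw ▸
    (withDensity_absolutelyContinuous _ _).ae_le (ae_restrict_mem measurableSet_Icc)
  have hint (θ : ℝ) : Integrable (fun b => pinball α b θ) ν := by
    rw [← Measure.restrict_eq_self_of_ae_mem hsupp]
    exact (continuous_pinball α θ).continuousOn.integrableOn_compact isCompact_Icc
  have hlower : ENNReal.ofReal p • volume.restrict (Icc (0 : ℝ) 1) ≤ ν := by
    rw [hlaw, ← withDensity_const]
    exact withDensity_mono ((ae_restrict_iff' measurableSet_Icc).2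
      (ae_of_all _ fun x hx => ENNReal.ofReal_le_ofReal (hq x hx)))
  have hcdf : ν.real (Iio αstar) = α := by
    rw [map_measureReal_apply hβmeas measurableSet_Iio]
    exact hαstar
  rw [← integral_map hβmeas.aemeasurable (continuous_pinball α τ).aestronglyMeasurable,
    ← integral_map hβmeas.aemeasurable (continuous_pinball α αstar).aestronglyMeasurable,
    integral_pinball_sub_integral_pinball hcdf (hint τ) (hint αstar)]
  exact mul_sq_div_two_le_integral_pinballRemainder hp.le hlower (uIcc_subset_Icc hαstarmem hτ)

/-- Quadratic lower bound on the excess pinball loss (Proposition 4 of the paper):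
if `β` has a density `q ≥ p > 0` on `[0,1]` and `ℙ(β < α*) = α`, then for every
`τ ∈ [0,1]`, `E[ℓ(β,τ)] − E[ℓ(β,α*)] ≥ p(τ − α*)²/2`. -/
theorem pinball_excess_loss_quadratic_lower_bound
    {Ω : Type*} [MeasurableSpace Ω] (μ : Measure Ω) [IsProbabilityMeasure μ]
    (α : ℝ) (hα : α ∈ Set.Ioo (0 : ℝ) 1)
    (β : Ω → ℝ) (hβmeas : Measurable β)
    (q : ℝ → ℝ) (hqmeas : Measurable q)
    (hlaw : Measure.map β μ
      = (volume.restrict (Set.Icc (0 : ℝ) 1)).withDensity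
          (fun x => ENNReal.ofReal (q x)))
    (p : ℝ) (hp : 0 < p) (hq : ∀ x ∈ Set.Icc (0 : ℝ) 1, p ≤ q x)
    (αstar : ℝ) (hαstarmem : αstar ∈ Set.Icc (0 : ℝ) 1)
    (hαstar : (μ {ω | β ω < αstar}).toReal = α)
    (τ : ℝ) (hτ : τ ∈ Set.Icc (0 : ℝ) 1) :
    p * (τ - αstar) ^ 2 / 2
      ≤ (∫ ω, pinball α (β ω) τ ∂μ) - (∫ ω, pinball α (β ω) αstar ∂μ) :=
  pinball_excess_loss_quadratic_lower_bound_general μ α β hβmeas q hlaw p hp hq αstar hαstarmem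
    hαstar τ hτ
end

section
/- Let k ≥ 1, let p₁,…,p_k be nonnegative reals with Σ_i p_i = 1, let ℓ₁,…,ℓ_k ∈ ℝ, let η ≥ 0, and define p̃_i := p_i·exp(−η ℓ_i) / Σ_{j=1}^k p_j·exp(−η ℓ_j). Then (i) p̃_i − p_i = p_i·Σ_{i'=1}^k p̃_{i'}·(exp(η(ℓ_{i'} − ℓ_i)) − 1) for every i, and (ii) if |ℓ_{i'} − ℓ_i| ≤ B for all i, i' and some B ≥ 0, then |p̃_i − p_i| ≤ p_i·η·B·exp(ηB) for every i. -/
/-!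
Dividing the numerator and denominator of `p̃ᵢ` by `exp (-η ℓᵢ)` writes `p̃ᵢ / pᵢ` as
`∑ᵢ' p̃ᵢ' exp (η (ℓᵢ' - ℓᵢ))`, a `p̃`-average; subtracting `1 = ∑ᵢ' p̃ᵢ'` gives (i).
For (ii), each factor `exp (η (ℓᵢ' - ℓᵢ)) - 1` has absolute value at most `ηB exp (ηB)`,
hence so does their `p̃`-average.
-/

open Real Finset

theorem abs_exp_sub_one_le_mul_exp {x a : ℝ} (hx : |x| ≤ a) : |exp x - 1| ≤ a * exp a := by
  have ha : 0 ≤ a := (abs_nonneg x).trans hx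
  obtain ⟨hax, hxa⟩ := abs_le.mp hx
  have h1a : 1 ≤ exp a := one_le_exp ha
  have hinv : exp (-a) * exp a = 1 := by rw [← exp_add, neg_add_cancel, exp_zero]
  rw [abs_le]
  constructor
  · nlinarith [add_one_le_exp x]
  · nlinarith [exp_le_exp.mpr hxa, one_sub_le_exp_neg a]

theorem abs_sum_mul_le_of_sum_eq_one {ι : Type*} {s : Finset ι} {q f : ι → ℝ} {c : ℝ}
    (hq0 : ∀ i ∈ s, 0 ≤ q i) (hq1 : ∑ i ∈ s, q i = 1) (hf : ∀ i ∈ s, |f i| ≤ c) :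
    |∑ i ∈ s, q i * f i| ≤ c :=
  calc |∑ i ∈ s, q i * f i|
      ≤ ∑ i ∈ s, |q i * f i| := abs_sum_le_sum_abs _ _
    _ ≤ ∑ i ∈ s, q i * c := sum_le_sum fun i hi => by
        rw [abs_mul, abs_of_nonneg (hq0 i hi)]
        exact mul_le_mul_of_nonneg_left (hf i hi) (hq0 i hi)
    _ = c := by rw [← sum_mul, hq1, one_mul]

section ExpReweight

variable {ι : Type*} [Fintype ι] {p ℓ : ι → ℝ} {η : ℝ}

noncomputable def expReweight (p : ι → ℝ) (η : ℝ) (ℓ : ι → ℝ) (i : ι) : ℝ :=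
  p i * exp (-η * ℓ i) / ∑ j, p j * exp (-η * ℓ j)

theorem sum_mul_exp_pos (hp0 : ∀ i, 0 ≤ p i) (hp1 : ∑ i, p i = 1) :
    0 < ∑ j, p j * exp (-η * ℓ j) := by
  obtain ⟨i, -, hi⟩ := exists_lt_of_sum_lt (s := univ) (f := 0) (g := p) (by simp [hp1])
  exact sum_pos' (fun j _ => mul_nonneg (hp0 j) (exp_pos _).le)
    ⟨i, mem_univ i, mul_pos hi (exp_pos _)⟩

theorem expReweight_nonneg (hp0 : ∀ i, 0 ≤ p i) (hp1 : ∑ i, p i = 1) (i : ι) :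
    0 ≤ expReweight p η ℓ i :=
  div_nonneg (mul_nonneg (hp0 i) (exp_pos _).le) (sum_mul_exp_pos hp0 hp1).le

theorem sum_expReweight (hp0 : ∀ i, 0 ≤ p i) (hp1 : ∑ i, p i = 1) :
    ∑ i, expReweight p η ℓ i = 1 := by
  simp only [expReweight]
  rw [← sum_div, div_self (sum_mul_exp_pos hp0 hp1).ne']

theorem expReweight_mul_exp (i' i : ι) :
    expReweight p η ℓ i' * exp (η * (ℓ i' - ℓ i))
      = p i' * exp (-η * ℓ i) / ∑ j, p j * exp (-η * ℓ j) := by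
  rw [expReweight, div_mul_eq_mul_div, mul_assoc, ← exp_add]
  ring_nf

theorem expReweight_sub_eq (hp0 : ∀ i, 0 ≤ p i) (hp1 : ∑ i, p i = 1) (i : ι) :
    expReweight p η ℓ i - p i
      = p i * ∑ i', expReweight p η ℓ i' * (exp (η * (ℓ i' - ℓ i)) - 1) := by
  have hterm : ∀ i', expReweight p η ℓ i' * (exp (η * (ℓ i' - ℓ i)) - 1)
      = p i' * exp (-η * ℓ i) / ∑ j, p j * exp (-η * ℓ j) - expReweight p η ℓ i' := fun i' => by
    rw [mul_sub, mul_one, expReweight_mul_exp]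
  rw [sum_congr rfl fun i' _ => hterm i', sum_sub_distrib, sum_expReweight hp0 hp1, ← sum_div,
    ← sum_mul, hp1, one_mul, expReweight]
  ring

theorem abs_expReweight_sub_le (hp0 : ∀ i, 0 ≤ p i) (hp1 : ∑ i, p i = 1) (hη : 0 ≤ η)
    {B : ℝ} (hℓ : ∀ i i', |ℓ i' - ℓ i| ≤ B) (i : ι) :
    |expReweight p η ℓ i - p i| ≤ p i * η * B * exp (η * B) := by
  have hexp : ∀ i', |exp (η * (ℓ i' - ℓ i)) - 1| ≤ η * B * exp (η * B) := fun i' =>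
    abs_exp_sub_one_le_mul_exp <| by
      rw [abs_mul, abs_of_nonneg hη]
      exact mul_le_mul_of_nonneg_left (hℓ i i') hη
  have havg : |∑ i', expReweight p η ℓ i' * (exp (η * (ℓ i' - ℓ i)) - 1)|
      ≤ η * B * exp (η * B) :=
    abs_sum_mul_le_of_sum_eq_one (fun i' _ => expReweight_nonneg hp0 hp1 i')
      (sum_expReweight hp0 hp1) fun i' _ => hexp i'
  calc |expReweight p η ℓ i - p i|
      = p i * |∑ i', expReweight p η ℓ i' * (exp (η * (ℓ i' - ℓ i)) - 1)| := by
        rw [expReweight_sub_eq hp0 hp1, abs_mul, abs_of_nonneg (hp0 i)]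
    _ ≤ p i * (η * B * exp (η * B)) := mul_le_mul_of_nonneg_left havg (hp0 i)
    _ = p i * η * B * exp (η * B) := by ring

end ExpReweight

theorem exp_reweighting_stability_general
    (k : ℕ)
    (p : Fin k → ℝ) (hp0 : ∀ i, 0 ≤ p i) (hp1 : ∑ i, p i = 1)
    (ℓ : Fin k → ℝ) (η : ℝ) (hη : 0 ≤ η)
    (ptil : Fin k → ℝ)
    (hptil : ∀ i, ptil i
      = p i * Real.exp (-η * ℓ i) / ∑ j, p j * Real.exp (-η * ℓ j)) :
    (∀ i, ptil i - p i
      = p i * ∑ i', ptil i' * (Real.exp (η * (ℓ i' - ℓ i)) - 1)) ∧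
    (∀ B : ℝ, 0 ≤ B → (∀ i i', |ℓ i' - ℓ i| ≤ B) →
      ∀ i, |ptil i - p i| ≤ p i * η * B * Real.exp (η * B)) := by
  obtain rfl : ptil = expReweight p η ℓ := funext hptil
  exact ⟨expReweight_sub_eq hp0 hp1,
    fun B _ hℓ => abs_expReweight_sub_le hp0 hp1 hη hℓ⟩

/-- Stability of one step of the exponential-reweighting update (from the proof of
Theorem 6 of the paper): with `p̃_i := p_i exp(−η ℓ_i) / ∑_j p_j exp(−η ℓ_j)`,
(i) `p̃_i − p_i = p_i ∑_{i'} p̃_{i'} (exp(η(ℓ_{i'} − ℓ_i)) − 1)`, and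
(ii) if the losses have spread at most `B`, then `|p̃_i − p_i| ≤ p_i η B exp(ηB)`. -/
theorem exp_reweighting_stability
    (k : ℕ) (hk : 1 ≤ k)
    (p : Fin k → ℝ) (hp0 : ∀ i, 0 ≤ p i) (hp1 : ∑ i, p i = 1)
    (ℓ : Fin k → ℝ) (η : ℝ) (hη : 0 ≤ η)
    (ptil : Fin k → ℝ)
    (hptil : ∀ i, ptil i
      = p i * Real.exp (-η * ℓ i) / ∑ j, p j * Real.exp (-η * ℓ j)) :
    (∀ i, ptil i - p i
      = p i * ∑ i', ptil i' * (Real.exp (η * (ℓ i' - ℓ i)) - 1)) ∧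
    (∀ B : ℝ, 0 ≤ B → (∀ i i', |ℓ i' - ℓ i| ≤ B) →
      ∀ i, |ptil i - p i| ≤ p i * η * B * Real.exp (η * B)) :=
  exp_reweighting_stability_general k p hp0 hp1 ℓ η hη ptil hptil
end
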